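/- For every looped simple graph G and every vertex v ∈ V(G), T_G(−1/2) + T_{G+v}(−1/2) − T_{G−v}(−1/2) = 0, where the polynomials T_G, T_{G+v}, T_{G−v} ∈ ℤ[z] are evaluated at the rational number −1/2. -/

import Mathlib

open Matrix Polynomial

/-- The principal submatrix of `M` with rows and columns indexed by the finite set `S`;
by convention the determinant of the empty principal submatrix is `1`, so it is nonsingular. -/
def psub {R V : Type*} (M : Matrix V V R) (S : Finset V) : Matrix ↥S ↥S R :=
  M.submatrix Subtype.val Subtype.val

/-- The width of a set system on a finite ground set, given by the predicate `P` describing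
its feasible sets: the maximum cardinality of a feasible set minus the minimum cardinality. -/
noncomputable def sysWidth {V : Type*} (P : Finset V → Prop) : ℕ :=
  sSup {k | ∃ S, P S ∧ S.card = k} - sInf {k | ∃ S, P S ∧ S.card = k}

/-- The width of the twist `D(M) * A`, where `D(M)` is the delta-matroid of the
symmetric matrix `M` (feasible sets = index sets of nonsingular principal submatrices):
a set `S` is feasible in `D(M) * A` iff `S ∆ A` is feasible in `D(M)`. -/
noncomputable def twistWidth {R V : Type*} [CommRing R] [DecidableEq V]
    (M : Matrix V V R) (A : Finset V) : ℕ :=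
  sysWidth fun S => (psub M (symmDiff S A)).det ≠ 0

/-- The twist polynomial of the looped simple graph with adjacency matrix `M` over `𝔽₂`:
`T_G(z) = Σ_{A ⊆ V(G)} z^{w(D(G)*A)}`. -/
noncomputable def twistPoly {R V : Type*} [CommRing R] [Fintype V] [DecidableEq V]
    (M : Matrix V V R) : Polynomial ℤ :=
  ∑ A : Finset V, (X : Polynomial ℤ) ^ twistWidth M A

/-- Vertex deletion `G - v`: delete the row and column of the adjacency matrix at `v`. -/
def vdel {R V : Type*} (M : Matrix V V R) (v : V) :
    Matrix {u : V // u ≠ v} {u : V // u ≠ v} R :=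
  M.submatrix Subtype.val Subtype.val

/-- Loop complementation `G + v`: add `1` to the diagonal entry at `v` (over `𝔽₂`). -/
def lcomp {V : Type*} [DecidableEq V] (M : Matrix V V (ZMod 2)) (v : V) :
    Matrix V V (ZMod 2) :=
  M + Matrix.single v v 1

/-!
Write `r(S)` for the rank of the principal submatrix `M[S]` of a symmetric matrix `M` over a
field. Every symmetric matrix has a nonsingular principal submatrix of full rank, and deleting
one index lowers `r` by at most two; hence the feasible sets of the twist `D(M) * A` have sizes
ranging exactly from `|A| - r(A)` to `|A| + r(Aᶜ)`, i.e. `w(D(M) * A) = r(A) + r(Aᶜ)`.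

Over `𝔽₂`, bordering a symmetric matrix by a new row and column raises its rank by `0` and `1`
(in some order) for the two possible new diagonal entries, or by `2` for both. At `x = -1/2`
both cases give `x^r(G) + x^r(G+v) = x^r(G-v) / 2`, so for `v ∉ A` the four terms of
`T_G(-1/2) + T_{G+v}(-1/2)` indexed by `A` and `A ∪ {v}` add up to the term of `T_{G-v}(-1/2)`
indexed by `A`.
-/

open Function

section RowDeletion

variable {K : Type*} [Field K]

lemma Set.range_eq_insert_range_ne {α β : Type*} (f : α → β) (a : α) :
    Set.range f = insert (f a) (Set.range fun b : {b // b ≠ a} => f b) := by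
  ext y
  constructor
  · rintro ⟨b, rfl⟩
    by_cases hb : b = a
    · exact hb ▸ Set.mem_insert _ _
    · exact Set.mem_insert_of_mem _ ⟨⟨b, hb⟩, rfl⟩
  · rintro (rfl | ⟨b, rfl⟩) <;> exact Set.mem_range_self _

open Classical in
theorem Matrix.rank_eq_rank_deleteRow_add {m n : Type*} [Fintype m] [Fintype n]
    (A : Matrix m n K) (i : m) :
    A.rank = (A.submatrix (Subtype.val : {j // j ≠ i} → m) id).rank +
      if A i ∈ Submodule.span K (Set.range fun j : {j // j ≠ i} => A j) then 0 else 1 := by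
  rw [rank_eq_finrank_span_row, rank_eq_finrank_span_row, row, row,
    Set.range_eq_insert_range_ne A i]
  split_ifs with h
  · rw [Submodule.span_insert_eq_span h, add_zero]; rfl
  · rw [Submodule.span_insert, sup_comm, Submodule.finrank_sup_span_singleton h]; rfl

lemma Matrix.rank_le_rank_vdel_add_two {ι : Type*} [Fintype ι] [DecidableEq ι]
    (N : Matrix ι ι K) (v : ι) :
    N.rank ≤ (vdel N v).rank + 2 := by
  classical
  have hrow := rank_eq_rank_deleteRow_add N v
  set R := N.submatrix (Subtype.val : {u // u ≠ v} → ι) id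
  have hcol := rank_eq_rank_deleteRow_add Rᵀ v
  rw [rank_transpose] at hcol
  have hvdel :
      (Rᵀ.submatrix (Subtype.val : {u // u ≠ v} → ι) id).rank = (vdel N v).rank := by
    rw [← rank_transpose]
    rfl
  split_ifs at hrow hcol <;> omega

end RowDeletion

section Border

variable {K ι : Type*} [Field K] [Fintype ι] [DecidableEq ι] {N : Matrix ι ι K} {v : ι}

def offDiagRow (N : Matrix ι ι K) (v : ι) : {u // u ≠ v} → K := fun u => N v u

open Classical in
lemma Matrix.IsSymm.rank_deleteRow_eq_rank_vdel_add (hN : N.IsSymm) :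
    (N.submatrix (Subtype.val : {u // u ≠ v} → ι) id).rank = (vdel N v).rank +
      if offDiagRow N v ∈ Submodule.span K (Set.range (vdel N v)) then 0 else 1 := by
  rw [← rank_transpose, transpose_submatrix, hN.eq, rank_eq_rank_deleteRow_add _ v]
  rfl

lemma Matrix.IsSymm.rank_eq_rank_vdel_add_two (hN : N.IsSymm)
    (hb : offDiagRow N v ∉ Submodule.span K (Set.range (vdel N v))) :
    N.rank = (vdel N v).rank + 2 := by
  have hrow : N v ∉ Submodule.span K (Set.range fun j : {j // j ≠ v} => N j) := fun h => by
    have := Submodule.apply_mem_span_image_of_mem_span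
      (LinearMap.funLeft K K (Subtype.val : {u // u ≠ v} → ι)) h
    rw [← Set.range_comp] at this
    exact hb this
  rw [rank_eq_rank_deleteRow_add N v, hN.rank_deleteRow_eq_rank_vdel_add, if_neg hb, if_neg hrow]

open Classical in
lemma Matrix.IsSymm.rank_eq_rank_vdel_add_of_vecMul_eq (hN : N.IsSymm)
    {w : {u // u ≠ v} → K} (hw : w ᵥ* vdel N v = offDiagRow N v) :
    N.rank = (vdel N v).rank + if N v v = w ⬝ᵥ offDiagRow N v then 0 else 1 := by
  set S := Submodule.span K (Set.range fun j : {j // j ≠ v} => N j)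
  have hb : offDiagRow N v ∈ Submodule.span K (Set.range (vdel N v)) := by
    rw [← hw, vecMul_eq_sum]
    exact Submodule.sum_mem _ fun j _ => Submodule.smul_mem _ _ (Submodule.subset_span ⟨j, rfl⟩)
  have hy : ∑ j, w j • N j ∈ S :=
    Submodule.sum_mem _ fun j _ => Submodule.smul_mem _ _ (Submodule.subset_span ⟨j, rfl⟩)
  -- Modulo the other rows, `N v` is a multiple of `e_v`, and `e_v` is not in their span.
  have hNv : N v = ∑ j, w j • N j + (N v v - w ⬝ᵥ offDiagRow N v) • Pi.single v 1 := by
    funext u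
    by_cases hu : u = v
    · subst hu
      simp [Finset.sum_apply, dotProduct, offDiagRow, hN.apply]
    · have := congrFun hw ⟨u, hu⟩
      simp_all [Finset.sum_apply, vecMul, dotProduct, vdel, offDiagRow]
  have hsingle : (Pi.single v 1 : ι → K) ∉ S := by
    let ψ : (ι → K) →ₗ[K] K :=
      LinearMap.proj v - ∑ j : {j // j ≠ v}, w j • LinearMap.proj j.1
    have hS : S ≤ LinearMap.ker ψ := Submodule.span_le.mpr <| by
      rintro _ ⟨k, rfl⟩
      have := congrFun hw k
      simp_all [ψ, vecMul, dotProduct, vdel, offDiagRow, hN.apply k.1]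
    intro h
    simpa [ψ, Pi.single_apply, fun j : {j // j ≠ v} => j.2] using hS h
  have hmem : N v ∈ S ↔ N v v = w ⬝ᵥ offDiagRow N v := by
    rw [← sub_eq_zero]
    set α := N v v - w ⬝ᵥ offDiagRow N v
    calc N v ∈ S ↔ ∑ j, w j • N j + α • Pi.single v 1 ∈ S := by rw [← hNv]
      _ ↔ α • (Pi.single v 1 : ι → K) ∈ S := Submodule.add_mem_iff_right S hy
      _ ↔ α = 0 := by
        by_cases hα : α = 0
        · simp [hα]
        · simp [hα, Submodule.smul_mem_iff S hα, hsingle]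
  rw [rank_eq_rank_deleteRow_add N v, hN.rank_deleteRow_eq_rank_vdel_add, if_pos hb, add_zero,
    if_congr hmem rfl rfl]

end Border

section Witness

variable {K ι : Type*} [Field K] [Fintype ι] [DecidableEq ι] {N : Matrix ι ι K}

/-- Take `T` indexing a basis of the row space. By symmetry, if `g ᵥ* N[T] = 0` then `g`,
extended by zero, satisfies `g ᵥ* N = 0`; so `N[T]` is nonsingular. -/
lemma Matrix.IsSymm.exists_det_psub_ne_zero (hN : N.IsSymm) :
    ∃ T : Finset ι, T.card = N.rank ∧ (psub N T).det ≠ 0 := by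
  classical
  obtain ⟨b, -, -, hspan, hind⟩ :=
    exists_linearIndepOn_extension (linearIndepOn_empty K N) (Set.empty_subset Set.univ)
  set T := b.toFinset
  rw [← Set.coe_toFinset b] at hspan hind
  have hdet : (psub N T).det ≠ 0 := by
    rw [← isUnit_iff_ne_zero, ← isUnit_iff_isUnit_det, ← linearIndependent_rows_iff_isUnit,
      Fintype.linearIndependent_iff]
    intro g hg
    let ψ : (ι → K) →ₗ[K] K := ∑ t : T, g t • LinearMap.proj t.1
    have hψ : Submodule.span K (N '' T) ≤ LinearMap.ker ψ := Submodule.span_le.mpr <| by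
      rintro _ ⟨s, hs, rfl⟩
      have := congrFun hg ⟨s, hs⟩
      simpa [ψ, Finset.sum_apply, psub, hN.apply] using this
    have hy : ∑ t : T, g t • N t = 0 := by
      funext j
      have := hψ (hspan ⟨j, trivial, rfl⟩)
      simpa [ψ, Finset.sum_apply, hN.apply] using this
    exact Fintype.linearIndependent_iff.mp hind g hy
  refine ⟨T, le_antisymm ?_ ?_, hdet⟩
  · calc T.card = (psub N T).rank := by
          rw [rank_of_isUnit _ ((isUnit_iff_isUnit_det _).mpr (isUnit_iff_ne_zero.mpr hdet)),
            Fintype.card_coe]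
      _ ≤ N.rank := rank_submatrix_le _ _ _
  · calc N.rank ≤ Set.finrank K (Set.range fun t : T => N t) := by
          rw [rank_eq_finrank_span_row]
          refine Submodule.finrank_mono (Submodule.span_le.mpr ?_)
          rintro _ ⟨j, rfl⟩
          exact Set.image_eq_range N (T : Set ι) ▸ hspan ⟨j, trivial, rfl⟩
      _ ≤ T.card := by simpa using finrank_range_le_card (R := K) fun t : T => N t

end Witness

section LoopComplement

variable {ι : Type*} [DecidableEq ι] {N : Matrix ι ι (ZMod 2)}

lemma isSymm_lcomp (hN : N.IsSymm) (v : ι) : (lcomp N v).IsSymm :=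
  hN.add <| IsSymm.ext fun i j => by simp only [single_apply, and_comm]

@[simp]
lemma vdel_lcomp (N : Matrix ι ι (ZMod 2)) (v : ι) : vdel (lcomp N v) v = vdel N v := by
  ext i j
  simp [vdel, lcomp, i.2.symm]

@[simp]
lemma offDiagRow_lcomp (N : Matrix ι ι (ZMod 2)) (v : ι) :
    offDiagRow (lcomp N v) v = offDiagRow N v := by
  ext j
  simp [offDiagRow, lcomp, j.2.symm]

@[simp]
lemma lcomp_apply_self (N : Matrix ι ι (ZMod 2)) (v : ι) : lcomp N v v v = N v v + 1 := by
  simp [lcomp]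

lemma Matrix.IsSymm.neg_half_pow_rank_add_rank_lcomp [Fintype ι] (hN : N.IsSymm) (v : ι) :
    (-1 / 2 : ℚ) ^ N.rank + (-1 / 2) ^ (lcomp N v).rank = (-1 / 2) ^ (vdel N v).rank / 2 := by
  by_cases hb : offDiagRow N v ∈ Submodule.span (ZMod 2) (Set.range (vdel N v))
  · obtain ⟨w, hw⟩ := (Submodule.mem_span_range_iff_exists_fun _).mp hb
    rw [← vecMul_eq_sum] at hw
    have hw' : w ᵥ* vdel (lcomp N v) v = offDiagRow (lcomp N v) v := by simpa using hw
    rw [hN.rank_eq_rank_vdel_add_of_vecMul_eq hw,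
      (isSymm_lcomp hN v).rank_eq_rank_vdel_add_of_vecMul_eq hw',
      vdel_lcomp, offDiagRow_lcomp, lcomp_apply_self]
    rcases (by decide : ∀ a c : ZMod 2, (a = c ∧ a + 1 ≠ c) ∨ (a ≠ c ∧ a + 1 = c))
      (N v v) (w ⬝ᵥ offDiagRow N v) with ⟨h1, h2⟩ | ⟨h1, h2⟩
    · rw [if_pos h1, if_neg h2]; ring
    · rw [if_neg h1, if_pos h2]; ring
  · have hb' : offDiagRow (lcomp N v) v ∉
        Submodule.span (ZMod 2) (Set.range (vdel (lcomp N v) v)) := by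
      simpa using hb
    rw [hN.rank_eq_rank_vdel_add_two hb, (isSymm_lcomp hN v).rank_eq_rank_vdel_add_two hb',
      vdel_lcomp]
    ring

end LoopComplement

lemma psub_map_subtype {R V : Type*} (M : Matrix V V R) {p : V → Prop}
    (T : Finset (Subtype p)) :
    (psub M (T.map (Embedding.subtype p))).submatrix
        (T.equivMap (Embedding.subtype p)) (T.equivMap (Embedding.subtype p)) =
      psub (M.submatrix Subtype.val Subtype.val) T :=
  rfl

section PrincipalRank

variable {K V : Type*} [Field K] (M : Matrix V V K)

noncomputable def principalRank (S : Finset V) : ℕ := (psub M S).rank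

lemma principalRank_map_subtype {p : V → Prop} (T : Finset (Subtype p)) :
    principalRank M (T.map (Embedding.subtype p)) =
      principalRank (M.submatrix Subtype.val Subtype.val) T := by
  rw [principalRank, principalRank, ← psub_map_subtype, rank_submatrix]

lemma principalRank_erase [DecidableEq V] {X : Finset V} {v : V} (hv : v ∈ X) :
    principalRank M (X.erase v) = (vdel (psub M X) ⟨v, hv⟩).rank := by
  let e : {u : X // u ≠ ⟨v, hv⟩} ≃ X.erase v :=
    (Equiv.subtypeSubtypeEquivSubtypeExists _ _).trans <| Equiv.subtypeEquivRight fun u => by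
      simp [Finset.mem_erase, and_comm]
  rw [principalRank, ← rank_submatrix _ e e]
  rfl

lemma principalRank_mono {S T : Finset V} (h : S ⊆ T) :
    principalRank M S ≤ principalRank M T := by
  let incl : S → T := fun x => ⟨x.1, h x.2⟩
  have hS : psub M S = (psub M T).submatrix incl incl := rfl
  rw [principalRank, principalRank, hS]
  exact rank_submatrix_le _ _ _

lemma principalRank_le_card (S : Finset V) : principalRank M S ≤ S.card := by
  simpa [principalRank] using rank_le_card_width (psub M S)

lemma det_psub_ne_zero_iff [DecidableEq V] (S : Finset V) :
    (psub M S).det ≠ 0 ↔ principalRank M S = S.card := by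
  rw [← isUnit_iff_ne_zero, ← isUnit_iff_isUnit_det, ← linearIndependent_rows_iff_isUnit,
    linearIndependent_iff_card_eq_finrank_span, principalRank, rank_eq_finrank_span_row,
    Fintype.card_coe, eq_comm]
  rfl

lemma principalRank_insert_le [DecidableEq V] (a : V) (S : Finset V) :
    principalRank M (insert a S) ≤ principalRank M S + 2 :=
  calc principalRank M (insert a S)
      ≤ principalRank M ((insert a S).erase a) + 2 := by
        rw [principalRank_erase M (Finset.mem_insert_self a S)]
        exact rank_le_rank_vdel_add_two _ _
    _ ≤ principalRank M S + 2 := by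
        gcongr
        exact principalRank_mono M (Finset.erase_insert_subset a S)

lemma principalRank_le_add_two_mul_card_sdiff [DecidableEq V] {S T : Finset V} (h : T ⊆ S) :
    principalRank M S ≤ principalRank M T + 2 * (S \ T).card := by
  suffices ∀ D : Finset V, principalRank M (T ∪ D) ≤ principalRank M T + 2 * D.card by
    simpa [Finset.union_sdiff_of_subset h] using this (S \ T)
  intro D
  induction D using Finset.induction_on with
  | empty => simp
  | insert a D ha ih =>
    rw [Finset.union_insert, Finset.card_insert_of_notMem ha]
    have := principalRank_insert_le M a (T ∪ D)
    omega

end PrincipalRank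

lemma aeval_twistPoly {R S V : Type*} [CommRing R] [CommRing S] [Fintype V] [DecidableEq V]
    (M : Matrix V V R) (a : S) : aeval a (twistPoly M) = ∑ A, a ^ twistWidth M A := by
  simp [twistPoly]

lemma Finset.card_symmDiff {α : Type*} [DecidableEq α] (s t : Finset α) :
    (symmDiff s t).card = (s \ t).card + (t \ s).card := by
  rw [symmDiff_def]
  exact Finset.card_union_of_disjoint disjoint_sdiff_sdiff

lemma Finset.map_compl_subtype_ne {V : Type*} [Fintype V] [DecidableEq V] (v : V)
    (B : Finset {u // u ≠ v}) :
    Bᶜ.map (Embedding.subtype _) = (B.map (Embedding.subtype _))ᶜ.erase v := by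
  ext u
  by_cases hu : u = v <;> simp [hu]

lemma Finset.sum_eq_sum_subtype_ne {V β : Type*} [Fintype V] [DecidableEq V] [AddCommMonoid β]
    (v : V) (f : Finset V → β) :
    ∑ A : Finset V, f A = ∑ B : Finset {u // u ≠ v},
      (f (B.map (Embedding.subtype _)) + f (insert v (B.map (Embedding.subtype _)))) := by
  rw [← Finset.powerset_univ, ← Finset.insert_erase (Finset.mem_univ v),
    Finset.sum_powerset_insert (Finset.notMem_erase v _), ← Finset.sum_add_distrib]
  symm
  apply Finset.sum_nbij' (fun B => B.map (Embedding.subtype _)) (fun A => A.subtype (· ≠ v))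
  · intro B _
    simpa [Finset.subset_iff] using fun _ hx _ => hx
  · intro A _
    exact Finset.mem_univ _
  · intro B _
    ext u
    simp [u.2]
  · intro A hA
    exact Finset.subtype_map_of_mem fun x hx =>
      (Finset.mem_erase.mp (Finset.mem_powerset.mp hA hx)).1
  · intro B _
    rfl

section TwistWidth

variable {K V : Type*} [Field K] [DecidableEq V] {M : Matrix V V K}

lemma Matrix.IsSymm.exists_subset_det_psub_ne_zero (hM : M.IsSymm) (S : Finset V) :
    ∃ T ⊆ S, T.card = principalRank M S ∧ (psub M T).det ≠ 0 := by
  obtain ⟨T, hcard, hdet⟩ := (hM.submatrix (Subtype.val : S → V)).exists_det_psub_ne_zero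
  refine ⟨T.map (Embedding.subtype _), fun x hx => ?_, by rw [Finset.card_map, hcard]; rfl, ?_⟩
  · obtain ⟨y, -, rfl⟩ := Finset.mem_map.mp hx
    exact y.2
  · rwa [← det_submatrix_equiv_self (T.equivMap (Embedding.subtype _)),
      psub_map_subtype]

lemma card_le_principalRank_add_card_symmDiff {F : Finset V} (hF : (psub M F).det ≠ 0)
    (A : Finset V) : A.card ≤ principalRank M A + (symmDiff F A).card := by
  have hrkF := (det_psub_ne_zero_iff M F).mp hF
  have hsdiff :=
    principalRank_le_add_two_mul_card_sdiff M (Finset.inter_subset_left : F ∩ A ⊆ F)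
  rw [Finset.sdiff_inter_self_left] at hsdiff
  have hmono := principalRank_mono M (Finset.inter_subset_right : F ∩ A ⊆ A)
  have hFcard := Finset.card_inter_add_card_sdiff F A
  have hAcard := Finset.card_inter_add_card_sdiff A F
  rw [Finset.inter_comm] at hAcard
  rw [Finset.card_symmDiff]
  omega

lemma Matrix.IsSymm.isLeast_card_twist (hM : M.IsSymm) (A : Finset V) :
    IsLeast {k | ∃ S, (psub M (symmDiff S A)).det ≠ 0 ∧ S.card = k}
      (A.card - principalRank M A) := by
  refine ⟨?_, ?_⟩
  · obtain ⟨T, hTA, hcard, hdet⟩ := hM.exists_subset_det_psub_ne_zero A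
    refine ⟨symmDiff T A, by rwa [symmDiff_symmDiff_cancel_right], ?_⟩
    rw [symmDiff_of_le hTA, Finset.card_sdiff_of_subset hTA, hcard]
  · rintro _ ⟨S, hS, rfl⟩
    have := card_le_principalRank_add_card_symmDiff hS A
    rw [symmDiff_symmDiff_cancel_right] at this
    omega

lemma Matrix.IsSymm.isGreatest_card_twist [Fintype V] (hM : M.IsSymm) (A : Finset V) :
    IsGreatest {k | ∃ S, (psub M (symmDiff S A)).det ≠ 0 ∧ S.card = k}
      (A.card + principalRank M Aᶜ) := by
  obtain ⟨⟨S, hS, hcard⟩, hlow⟩ := hM.isLeast_card_twist Aᶜ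
  have hrk := principalRank_le_card M Aᶜ
  have hAc := Finset.card_compl A
  have hA := Finset.card_le_univ A
  refine ⟨⟨Sᶜ, ?_, ?_⟩, ?_⟩
  · rwa [← compl_symmDiff_compl, compl_compl]
  · have := Finset.card_le_univ S
    rw [Finset.card_compl]
    omega
  · rintro _ ⟨S', hS', rfl⟩
    have := hlow ⟨S'ᶜ, by rwa [compl_symmDiff_compl], rfl⟩
    have := Finset.card_compl S'
    have := Finset.card_le_univ S'
    omega

theorem Matrix.IsSymm.twistWidth_eq [Fintype V] (hM : M.IsSymm) (A : Finset V) :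
    twistWidth M A = principalRank M A + principalRank M Aᶜ := by
  have := principalRank_le_card M A
  rw [twistWidth, sysWidth, (hM.isGreatest_card_twist A).csSup_eq,
    (hM.isLeast_card_twist A).csInf_eq]
  omega

lemma Matrix.IsSymm.twistWidth_vdel [Fintype V] (hM : M.IsSymm) (v : V)
    (B : Finset {u // u ≠ v}) :
    twistWidth (vdel M v) B =
      principalRank M (B.map (Embedding.subtype _)) +
        principalRank M ((B.map (Embedding.subtype _))ᶜ.erase v) := by
  have hM' : (vdel M v).IsSymm := hM.submatrix _
  rw [hM'.twistWidth_eq, ← Finset.map_compl_subtype_ne, principalRank_map_subtype,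
    principalRank_map_subtype]
  rfl

end TwistWidth

section LoopedGraph

variable {V : Type*} [DecidableEq V]

lemma psub_lcomp_of_mem (M : Matrix V V (ZMod 2)) {X : Finset V} {v : V} (hv : v ∈ X) :
    psub (lcomp M v) X = lcomp (psub M X) ⟨v, hv⟩ := by
  ext x y
  simp [psub, lcomp, single_apply, Subtype.ext_iff, eq_comm]

lemma principalRank_lcomp_of_notMem (M : Matrix V V (ZMod 2)) {X : Finset V} {v : V}
    (hv : v ∉ X) : principalRank (lcomp M v) X = principalRank M X := by
  have : psub (lcomp M v) X = psub M X := by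
    ext x y
    have hx : v ≠ x.1 := fun h => hv (h ▸ x.2)
    simp [psub, lcomp, hx]
  rw [principalRank, this]
  rfl

lemma Matrix.IsSymm.neg_half_pow_principalRank_add_lcomp {M : Matrix V V (ZMod 2)}
    (hM : M.IsSymm) {X : Finset V} {v : V} (hv : v ∈ X) :
    (-1 / 2 : ℚ) ^ principalRank M X + (-1 / 2) ^ principalRank (lcomp M v) X =
      (-1 / 2) ^ principalRank M (X.erase v) / 2 := by
  rw [principalRank, principalRank, psub_lcomp_of_mem M hv, principalRank_erase M hv]
  exact (hM.submatrix _).neg_half_pow_rank_add_rank_lcomp _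

lemma Matrix.IsSymm.neg_half_pow_twistWidth_insert [Fintype V] {M : Matrix V V (ZMod 2)}
    (hM : M.IsSymm) {A : Finset V} {v : V} (hv : v ∉ A) :
    (-1 / 2 : ℚ) ^ twistWidth M A + (-1 / 2) ^ twistWidth M (insert v A) +
        ((-1 / 2) ^ twistWidth (lcomp M v) A + (-1 / 2) ^ twistWidth (lcomp M v) (insert v A)) =
      (-1 / 2) ^ (principalRank M A + principalRank M (Aᶜ.erase v)) := by
  have hM' := isSymm_lcomp hM v
  have hcompl := hM.neg_half_pow_principalRank_add_lcomp (Finset.mem_compl.mpr hv)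
  have hinsert := hM.neg_half_pow_principalRank_add_lcomp (Finset.mem_insert_self v A)
  rw [Finset.erase_insert hv] at hinsert
  rw [hM.twistWidth_eq, hM.twistWidth_eq, hM'.twistWidth_eq, hM'.twistWidth_eq,
    Finset.compl_insert, principalRank_lcomp_of_notMem M hv,
    principalRank_lcomp_of_notMem M (Finset.notMem_erase v Aᶜ)]
  simp only [pow_add]
  linear_combination (-1 / 2 : ℚ) ^ principalRank M A * hcompl +
    (-1 / 2 : ℚ) ^ principalRank M (Aᶜ.erase v) * hinsert

end LoopedGraph

/-- Corollary 4.5: for any looped simple graph `G` and vertex `v`,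
`T_G(−1/2) + T_{G+v}(−1/2) − T_{G−v}(−1/2) = 0`. -/
theorem twistPoly_eval_neg_half
    {V : Type*} [Fintype V] [DecidableEq V]
    (M : Matrix V V (ZMod 2)) (hM : M.IsSymm) (v : V) :
    Polynomial.aeval (-(1 : ℚ) / 2) (twistPoly M)
      + Polynomial.aeval (-(1 : ℚ) / 2) (twistPoly (lcomp M v))
      - Polynomial.aeval (-(1 : ℚ) / 2) (twistPoly (vdel M v)) = 0 := by
  simp only [aeval_twistPoly]
  rw [Finset.sum_eq_sum_subtype_ne v, Finset.sum_eq_sum_subtype_ne v, ← Finset.sum_add_distrib,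
    ← Finset.sum_sub_distrib]
  refine Finset.sum_eq_zero fun B _ => ?_
  rw [hM.neg_half_pow_twistWidth_insert (by simp), hM.twistWidth_vdel, sub_self]
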